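/- Let μ > 0 and λ ∈ ℝ with λ + μ > 0, and κ := (λ+3μ)/(λ+μ). For every k ∈ ℕ, the displacement field u(x) := r^{k/2} ψ_k(θ), defined on the slit plane ℝ² \ {(t,0) : t ≤ 0} via r := |x| and θ := arg(x₁ + i x₂) ∈ (−π, π), is smooth there and satisfies Navier's equation μΔu + (λ+μ)∇(∇·u) = 0 on the slit plane. -/

import Mathlib

/-- The angular function `ψ_k`. -/
noncomputable def psik (κ : ℝ) (k : ℕ) (θ : ℝ) : ℝ × ℝ :=
  (κ * Real.sin ((k : ℝ) * θ / 2) - ((k : ℝ) / 2) * Real.sin (((k : ℝ) / 2 - 2) * θ)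
      + ((k : ℝ) / 2 - (-1 : ℝ) ^ k) * Real.sin ((k : ℝ) * θ / 2),
   -(κ * Real.cos ((k : ℝ) * θ / 2)) - ((k : ℝ) / 2) * Real.cos (((k : ℝ) / 2 - 2) * θ)
      + ((k : ℝ) / 2 - (-1 : ℝ) ^ k) * Real.cos ((k : ℝ) * θ / 2))

/-- The slit plane `ℝ² \ {(t,0) : t ≤ 0}`. -/
def slitSet : Set (ℝ × ℝ) := {p : ℝ × ℝ | ¬(p.2 = 0 ∧ p.1 ≤ 0)}

/-- The displacement field `u(x) = r^{k/2} ψ_k(θ)` in polar coordinates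
`r = |x|`, `θ = arg(x₁ + i x₂) ∈ (−π, π)`. -/
noncomputable def upsi (κ : ℝ) (k : ℕ) (p : ℝ × ℝ) : ℝ × ℝ :=
  (Real.sqrt (p.1 ^ 2 + p.2 ^ 2) ^ ((k : ℝ) / 2))
    • psik κ k (Complex.arg ((p.1 : ℂ) + (p.2 : ℂ) * Complex.I))

/-- Partial derivative with respect to the first variable. -/
noncomputable def pd1R (f : ℝ × ℝ → ℝ) (p : ℝ × ℝ) : ℝ := fderiv ℝ f p (1, 0)

/-- Partial derivative with respect to the second variable. -/
noncomputable def pd2R (f : ℝ × ℝ → ℝ) (p : ℝ × ℝ) : ℝ := fderiv ℝ f p (0, 1)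

/-- Divergence of a planar field. -/
noncomputable def divR (u : ℝ × ℝ → ℝ × ℝ) (p : ℝ × ℝ) : ℝ :=
  pd1R (fun q => (u q).1) p + pd2R (fun q => (u q).2) p

/-!
Write `z = x₁ + i x₂`. On the slit plane `r^a e^{i a θ} = z^a` and `r^a e^{i (a-2) θ} = z̄ z^{a-1}`,
so with `a = k/2` and `m = k/2 - (-1)^k` the components of `u` are the real parts of
`-i (m + κ) z^a + i a z̄ z^{a-1}` and `(m - κ) z^a - a z̄ z^{a-1}`.
The fields `α z^a - a β z̄ z^{a-1}` form a family that is closed under `∂₁` and `∂₂` (the exponent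
drops by one and the coefficients change linearly), so every derivative in Navier's equation is
the real part of a member of the family. Since `z^a` is harmonic, `Δ` of such a field is
`-4 a (a-1) β z^{a-2}`; the divergence of `u` is `Re (2 a (1 - κ) i z^{a-1})`, and the two
combine to zero exactly when `(λ + μ) (κ - 1) = 2 μ`, which is the definition of `κ`.
-/

open Complex ComplexConjugate Set

noncomputable def toComplex (q : ℝ × ℝ) : ℂ := q.1 + q.2 * I

lemma toComplex_eq_equivRealProdCLM_symm : toComplex = equivRealProdCLM.symm := by
  ext1 q; simp [toComplex, equivRealProdCLM_symm_apply]

lemma slitSet_eq_preimage : slitSet = toComplex ⁻¹' slitPlane := by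
  ext p
  simp only [slitSet, mem_preimage, mem_slitPlane_iff, toComplex]
  simp
  tauto

lemma toComplex_mem_slitPlane {q : ℝ × ℝ} (hq : q ∈ slitSet) : toComplex q ∈ slitPlane := by
  rwa [slitSet_eq_preimage] at hq

lemma isOpen_slitSet : IsOpen slitSet := by
  rw [slitSet_eq_preimage, toComplex_eq_equivRealProdCLM_symm]
  exact isOpen_slitPlane.preimage (ContinuousLinearEquiv.continuous _)

section Partials

variable {E : Type*} [NormedAddCommGroup E] [NormedSpace ℝ E]

def HasPartialsAt (f : ℝ × ℝ → E) (d₁ d₂ : E) (p : ℝ × ℝ) : Prop :=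
  HasFDerivAt f
    ((ContinuousLinearMap.fst ℝ ℝ ℝ).smulRight d₁ + (ContinuousLinearMap.snd ℝ ℝ ℝ).smulRight d₂) p

lemma HasFDerivAt.hasPartialsAt {f : ℝ × ℝ → E} {L : ℝ × ℝ →L[ℝ] E} {d₁ d₂ : E} {p : ℝ × ℝ}
    (h : HasFDerivAt f L p) (h₁ : L (1, 0) = d₁) (h₂ : L (0, 1) = d₂) :
    HasPartialsAt f d₁ d₂ p := by
  unfold HasPartialsAt
  convert h using 1
  ext <;> simp [h₁, h₂]

variable {f g : ℝ × ℝ → E} {d₁ d₂ e₁ e₂ : E} {p : ℝ × ℝ}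

namespace HasPartialsAt

lemma hasFDerivAt (h : HasPartialsAt f d₁ d₂ p) :
    HasFDerivAt f ((ContinuousLinearMap.fst ℝ ℝ ℝ).smulRight d₁
      + (ContinuousLinearMap.snd ℝ ℝ ℝ).smulRight d₂) p :=
  h

lemma sub (hf : HasPartialsAt f d₁ d₂ p) (hg : HasPartialsAt g e₁ e₂ p) :
    HasPartialsAt (fun q => f q - g q) (d₁ - e₁) (d₂ - e₂) p :=
  (hf.hasFDerivAt.sub hg.hasFDerivAt).hasPartialsAt (by simp) (by simp)

lemma re {f : ℝ × ℝ → ℂ} {d₁ d₂ : ℂ} (h : HasPartialsAt f d₁ d₂ p) :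
    HasPartialsAt (fun q => (f q).re) d₁.re d₂.re p :=
  (reCLM.hasFDerivAt.comp p h.hasFDerivAt).hasPartialsAt (by simp) (by simp)

lemma pd1R_eq {f : ℝ × ℝ → ℝ} {d₁ d₂ : ℝ} (h : HasPartialsAt f d₁ d₂ p) : pd1R f p = d₁ := by
  simp [pd1R, h.hasFDerivAt.fderiv]

lemma pd2R_eq {f : ℝ × ℝ → ℝ} {d₁ d₂ : ℝ} (h : HasPartialsAt f d₁ d₂ p) : pd2R f p = d₂ := by
  simp [pd2R, h.hasFDerivAt.fderiv]

variable {𝔸 : Type*} [NormedCommRing 𝔸] [NormedAlgebra ℝ 𝔸] {f g : ℝ × ℝ → 𝔸} {d₁ d₂ e₁ e₂ : 𝔸}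

lemma mul (hf : HasPartialsAt f d₁ d₂ p) (hg : HasPartialsAt g e₁ e₂ p) :
    HasPartialsAt (fun q => f q * g q) (f p * e₁ + g p * d₁) (f p * e₂ + g p * d₂) p :=
  (hf.hasFDerivAt.mul hg.hasFDerivAt).hasPartialsAt (by simp) (by simp)

lemma const_mul (hf : HasPartialsAt f d₁ d₂ p) (c : 𝔸) :
    HasPartialsAt (fun q => c * f q) (c * d₁) (c * d₂) p :=
  (hf.hasFDerivAt.const_mul c).hasPartialsAt (by simp) (by simp)

end HasPartialsAt

lemma HasDerivAt.comp_hasPartialsAt {f : ℝ × ℝ → ℂ} {d₁ d₂ : ℂ} {g : ℂ → ℂ} {g' : ℂ}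
    (hg : HasDerivAt g g' (f p)) (hf : HasPartialsAt f d₁ d₂ p) :
    HasPartialsAt (fun q => g (f q)) (g' * d₁) (g' * d₂) p :=
  (hg.comp_hasFDerivAt p hf.hasFDerivAt).hasPartialsAt (by simp) (by simp)

lemma pd1R_congr_of_eqOn {f g : ℝ × ℝ → ℝ} {s : Set (ℝ × ℝ)} (hs : IsOpen s)
    (h : EqOn f g s) : EqOn (pd1R f) (pd1R g) s := fun _ hp => by
  rw [pd1R, pd1R, (Filter.eventuallyEq_of_mem (hs.mem_nhds hp) h).fderiv_eq]

lemma pd2R_congr_of_eqOn {f g : ℝ × ℝ → ℝ} {s : Set (ℝ × ℝ)} (hs : IsOpen s)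
    (h : EqOn f g s) : EqOn (pd2R f) (pd2R g) s := fun _ hp => by
  rw [pd2R, pd2R, (Filter.eventuallyEq_of_mem (hs.mem_nhds hp) h).fderiv_eq]

end Partials

lemma hasPartialsAt_toComplex (p : ℝ × ℝ) : HasPartialsAt toComplex 1 I p := by
  rw [toComplex_eq_equivRealProdCLM_symm]
  exact equivRealProdCLM.symm.toContinuousLinearMap.hasFDerivAt.hasPartialsAt
    (by simp [equivRealProdCLM_symm_apply]) (by simp [equivRealProdCLM_symm_apply])

lemma hasPartialsAt_conj_toComplex (p : ℝ × ℝ) :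
    HasPartialsAt (fun q => conj (toComplex q)) 1 (-I) p :=
  (conjCLE.hasFDerivAt.comp p (hasPartialsAt_toComplex p).hasFDerivAt).hasPartialsAt
    (by simp) (by simp)

lemma hasPartialsAt_cpow_toComplex (a : ℂ) {p : ℝ × ℝ} (hp : p ∈ slitSet) :
    HasPartialsAt (fun q => toComplex q ^ a)
      (a * toComplex p ^ (a - 1)) (a * toComplex p ^ (a - 1) * I) p := by
  simpa using (hasStrictDerivAt_cpow_const (toComplex_mem_slitPlane hp)).hasDerivAt
    |>.comp_hasPartialsAt (hasPartialsAt_toComplex p)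

noncomputable def cpowField (α β a : ℂ) (q : ℝ × ℝ) : ℂ :=
  α * toComplex q ^ a - a * β * (conj (toComplex q) * toComplex q ^ (a - 1))

lemma cpowField_add (α β α' β' a : ℂ) (q : ℝ × ℝ) :
    cpowField α β a q + cpowField α' β' a q = cpowField (α + α') (β + β') a q := by
  unfold cpowField; ring

lemma hasPartialsAt_cpowField (α β a : ℂ) {p : ℝ × ℝ} (hp : p ∈ slitSet) :
    HasPartialsAt (cpowField α β a) (cpowField (a * (α - β)) (a * β) (a - 1) p)
      (cpowField (a * I * (α + β)) (a * I * β) (a - 1) p) p := by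
  have h : HasPartialsAt (cpowField α β a) _ _ p :=
    ((hasPartialsAt_cpow_toComplex a hp).const_mul α).sub
      (((hasPartialsAt_conj_toComplex p).mul (hasPartialsAt_cpow_toComplex (a - 1) hp)).const_mul
        (a * β))
  convert h using 1 <;> unfold cpowField <;> ring

lemma eqOn_pd1R_re_cpowField (α β a : ℂ) :
    EqOn (pd1R fun q => (cpowField α β a q).re)
      (fun q => (cpowField (a * (α - β)) (a * β) (a - 1) q).re) slitSet := fun _ hq =>
  (hasPartialsAt_cpowField α β a hq).re.pd1R_eq

lemma eqOn_pd2R_re_cpowField (α β a : ℂ) :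
    EqOn (pd2R fun q => (cpowField α β a q).re)
      (fun q => (cpowField (a * I * (α + β)) (a * I * β) (a - 1) q).re) slitSet := fun _ hq =>
  (hasPartialsAt_cpowField α β a hq).re.pd2R_eq

lemma laplacian_re_cpowField (α β a : ℂ) {p : ℝ × ℝ} (hp : p ∈ slitSet) :
    pd1R (pd1R fun q => (cpowField α β a q).re) p + pd2R (pd2R fun q => (cpowField α β a q).re) p
      = (cpowField (-4 * a * (a - 1) * β) 0 (a - 1 - 1) p).re := by
  rw [pd1R_congr_of_eqOn isOpen_slitSet (eqOn_pd1R_re_cpowField α β a) hp,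
    eqOn_pd1R_re_cpowField _ _ _ hp,
    pd2R_congr_of_eqOn isOpen_slitSet (eqOn_pd2R_re_cpowField α β a) hp,
    eqOn_pd2R_re_cpowField _ _ _ hp, ← add_re, cpowField_add]
  congr 2
  · linear_combination (a - 1) * a * (α + 2 * β) * I_mul_I
  · linear_combination (a - 1) * a * β * I_mul_I

noncomputable def displacementField (κ m a : ℂ) (q : ℝ × ℝ) : ℝ × ℝ :=
  ((cpowField (-I * (m + κ)) (-I) a q).re, (cpowField (m - κ) 1 a q).re)

lemma eqOn_divR_displacementField (κ m a : ℂ) :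
    EqOn (divR (displacementField κ m a))
      (fun q => (cpowField (2 * a * (1 - κ) * I) 0 (a - 1) q).re) slitSet := fun q hq => by
  simp only [divR, displacementField]
  rw [eqOn_pd1R_re_cpowField _ _ _ hq, eqOn_pd2R_re_cpowField _ _ _ hq, ← add_re, cpowField_add]
  congr 2 <;> ring

theorem navier_displacementField (μ lam : ℝ) (κ m a : ℂ)
    (hκ : ((lam + μ : ℝ) : ℂ) * (κ - 1) = 2 * μ) {p : ℝ × ℝ} (hp : p ∈ slitSet) :
    (μ * (pd1R (pd1R fun q => (displacementField κ m a q).1) p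
          + pd2R (pd2R fun q => (displacementField κ m a q).1) p)
        + (lam + μ) * pd1R (divR (displacementField κ m a)) p = 0) ∧
    (μ * (pd1R (pd1R fun q => (displacementField κ m a q).2) p
          + pd2R (pd2R fun q => (displacementField κ m a q).2) p)
        + (lam + μ) * pd2R (divR (displacementField κ m a)) p = 0) := by
  have hdiv := eqOn_divR_displacementField κ m a
  simp only [displacementField]
  rw [laplacian_re_cpowField _ _ _ hp, laplacian_re_cpowField _ _ _ hp,
    pd1R_congr_of_eqOn isOpen_slitSet hdiv hp, eqOn_pd1R_re_cpowField _ _ _ hp,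
    pd2R_congr_of_eqOn isOpen_slitSet hdiv hp, eqOn_pd2R_re_cpowField _ _ _ hp,
    ← re_ofReal_mul, ← re_ofReal_mul, ← re_ofReal_mul, ← re_ofReal_mul, ← add_re, ← add_re]
  constructor
  · convert zero_re
    unfold cpowField
    linear_combination (-2 * a * (a - 1) * I * toComplex p ^ (a - 1 - 1)) * hκ
  · convert zero_re
    unfold cpowField
    linear_combination (2 * a * (a - 1) * toComplex p ^ (a - 1 - 1)) * hκ
      + (2 * a * (a - 1) * (1 - κ) * (lam + μ : ℝ) * toComplex p ^ (a - 1 - 1)) * I_sq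

lemma cpow_ofReal_eq_polar {z : ℂ} (hz : z ≠ 0) (a : ℝ) :
    z ^ (a : ℂ) = (‖z‖ ^ a : ℝ) * exp (a * arg z * I) := by
  have hlog : log z = (Real.log ‖z‖ : ℂ) + (arg z : ℂ) * I := rfl
  rw [cpow_def_of_ne_zero hz, hlog, Real.rpow_def_of_pos (norm_pos_iff.mpr hz), ofReal_exp,
    ← exp_add]
  push_cast
  ring_nf

lemma conj_mul_cpow_sub_one_eq_polar {z : ℂ} (hz : z ≠ 0) (a : ℝ) :
    conj z * z ^ ((a : ℂ) - 1) = (‖z‖ ^ a : ℝ) * exp ((a - 2) * arg z * I) := by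
  have hconj : conj z = ‖z‖ * exp (-arg z * I) := by
    conv_lhs => rw [← norm_mul_exp_arg_mul_I z]
    rw [map_mul, ← exp_conj, conj_ofReal]
    simp
  have hnorm : ‖z‖ ^ a = ‖z‖ * ‖z‖ ^ (a - 1) := by
    rw [Real.rpow_sub_one (norm_ne_zero_iff.mpr hz)]
    field_simp
  have hexp : exp ((a - 2) * arg z * I) = exp (-arg z * I) * exp ((a - 1) * arg z * I) := by
    rw [← exp_add]; ring_nf
  rw [hconj, show (a : ℂ) - 1 = ((a - 1 : ℝ) : ℂ) by push_cast; ring, cpow_ofReal_eq_polar hz,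
    hnorm, hexp]
  push_cast
  ring

lemma cpowField_ofReal_eq_polar (α β : ℂ) (a : ℝ) {q : ℝ × ℝ} (hq : q ∈ slitSet) :
    cpowField α β a q = (‖toComplex q‖ ^ a : ℝ) *
      (α * exp (a * arg (toComplex q) * I) - a * β * exp ((a - 2) * arg (toComplex q) * I)) := by
  have hz : toComplex q ≠ 0 := slitPlane_ne_zero (toComplex_mem_slitPlane hq)
  rw [cpowField, cpow_ofReal_eq_polar hz, conj_mul_cpow_sub_one_eq_polar hz]
  ring

lemma eqOn_upsi_displacementField (κ : ℝ) (k : ℕ) :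
    EqOn (upsi κ k) (displacementField κ ((k / 2 - (-1) ^ k : ℝ) : ℂ) ((k / 2 : ℝ) : ℂ))
      slitSet := by
  intro q hq
  simp only [upsi, psik, displacementField]
  rw [cpowField_ofReal_eq_polar _ _ _ hq, cpowField_ofReal_eq_polar _ _ _ hq, toComplex,
    norm_add_mul_I]
  set θ := arg ((q.1 : ℂ) + q.2 * I)
  have e₁ : ((k / 2 : ℝ) : ℂ) * θ * I = ((k / 2 * θ : ℝ) : ℂ) * I := by push_cast; ring
  have e₂ : (((k / 2 : ℝ) : ℂ) - 2) * θ * I = (((k / 2 - 2) * θ : ℝ) : ℂ) * I := by push_cast; ring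
  rw [e₁, e₂]
  ext <;> simp only [Prod.smul_fst, Prod.smul_snd, smul_eq_mul, sub_re, sub_im, mul_re,
    mul_im, neg_re, neg_im, I_re, I_im, ofReal_re, ofReal_im, add_re, add_im, one_re, one_im,
    exp_ofReal_mul_I_re, exp_ofReal_mul_I_im] <;> ring_nf

lemma contDiffOn_cpowField (α β a : ℂ) : ContDiffOn ℝ (⊤ : ℕ∞) (cpowField α β a) slitSet := by
  intro q hq
  have hpow (b : ℂ) : ContDiffAt ℝ (⊤ : ℕ∞) (fun w : ℂ => w ^ b) (toComplex q) :=
    (analyticAt_id.cpow analyticAt_const (toComplex_mem_slitPlane hq)).contDiffAt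
      |>.restrict_scalars ℝ
  have hz : ContDiff ℝ (⊤ : ℕ∞) toComplex :=
    toComplex_eq_equivRealProdCLM_symm ▸ equivRealProdCLM.symm.contDiff
  have hconj : ContDiff ℝ (⊤ : ℕ∞) (fun q => conj (toComplex q)) := conjCLE.contDiff.comp hz
  exact ((contDiffAt_const.mul ((hpow a).comp q hz.contDiffAt)).sub (contDiffAt_const.mul
    (hconj.contDiffAt.mul ((hpow (a - 1)).comp q hz.contDiffAt)))).contDiffWithinAt

lemma contDiffOn_displacementField (κ m a : ℂ) :
    ContDiffOn ℝ (⊤ : ℕ∞) (displacementField κ m a) slitSet :=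
  (reCLM.contDiff.comp_contDiffOn (contDiffOn_cpowField _ _ _)).prodMk
    (reCLM.contDiff.comp_contDiffOn (contDiffOn_cpowField _ _ _))

theorem stmt12_general (μ lam : ℝ) (hlm : 0 < lam + μ) (k : ℕ) :
    ContDiffOn ℝ (⊤ : ℕ∞) (upsi ((lam + 3 * μ) / (lam + μ)) k) slitSet ∧
    ∀ p ∈ slitSet,
      (μ * (pd1R (pd1R (fun q => (upsi ((lam + 3 * μ) / (lam + μ)) k q).1)) p
            + pd2R (pd2R (fun q => (upsi ((lam + 3 * μ) / (lam + μ)) k q).1)) p)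
        + (lam + μ) * pd1R (divR (upsi ((lam + 3 * μ) / (lam + μ)) k)) p = 0) ∧
      (μ * (pd1R (pd1R (fun q => (upsi ((lam + 3 * μ) / (lam + μ)) k q).2)) p
            + pd2R (pd2R (fun q => (upsi ((lam + 3 * μ) / (lam + μ)) k q).2)) p)
        + (lam + μ) * pd2R (divR (upsi ((lam + 3 * μ) / (lam + μ)) k)) p = 0) := by
  set κ := (lam + 3 * μ) / (lam + μ)
  have hκ : (lam + μ) * (κ - 1) = 2 * μ := by
    simp only [κ]
    field_simp [hlm.ne']
    ring
  have hs := isOpen_slitSet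
  have hu := eqOn_upsi_displacementField κ k
  have hu₁ : EqOn (fun q => (upsi κ k q).1) (fun q => (displacementField _ _ _ q).1) slitSet :=
    fun q hq => congrArg Prod.fst (hu hq)
  have hu₂ : EqOn (fun q => (upsi κ k q).2) (fun q => (displacementField _ _ _ q).2) slitSet :=
    fun q hq => congrArg Prod.snd (hu hq)
  have hdiv : EqOn (divR (upsi κ k)) (divR (displacementField _ _ _)) slitSet := fun q hq => by
    rw [divR, divR, pd1R_congr_of_eqOn hs hu₁ hq, pd2R_congr_of_eqOn hs hu₂ hq]
  refine ⟨(contDiffOn_displacementField _ _ _).congr hu, fun p hp => ?_⟩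
  rw [pd1R_congr_of_eqOn hs (pd1R_congr_of_eqOn hs hu₁) hp,
    pd2R_congr_of_eqOn hs (pd2R_congr_of_eqOn hs hu₁) hp,
    pd1R_congr_of_eqOn hs (pd1R_congr_of_eqOn hs hu₂) hp,
    pd2R_congr_of_eqOn hs (pd2R_congr_of_eqOn hs hu₂) hp,
    pd1R_congr_of_eqOn hs hdiv hp, pd2R_congr_of_eqOn hs hdiv hp]
  exact navier_displacementField μ lam _ _ _ (by exact_mod_cast hκ) hp

theorem stmt12 (μ lam : ℝ) (hμ : 0 < μ) (hlm : 0 < lam + μ) (k : ℕ) :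
    ContDiffOn ℝ (⊤ : ℕ∞) (upsi ((lam + 3 * μ) / (lam + μ)) k) slitSet ∧
    ∀ p ∈ slitSet,
      (μ * (pd1R (pd1R (fun q => (upsi ((lam + 3 * μ) / (lam + μ)) k q).1)) p
            + pd2R (pd2R (fun q => (upsi ((lam + 3 * μ) / (lam + μ)) k q).1)) p)
        + (lam + μ) * pd1R (divR (upsi ((lam + 3 * μ) / (lam + μ)) k)) p = 0) ∧
      (μ * (pd1R (pd1R (fun q => (upsi ((lam + 3 * μ) / (lam + μ)) k q).2)) p
            + pd2R (pd2R (fun q => (upsi ((lam + 3 * μ) / (lam + μ)) k q).2)) p)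
        + (lam + μ) * pd2R (divR (upsi ((lam + 3 * μ) / (lam + μ)) k)) p = 0) :=
  stmt12_general μ lam hlm k
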